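/- Let A = [a_1+1, ..., a_r+1] with a_1, ..., a_r positive integers. Then the adjoint satisfies A* = [2_{a_r}] ∗ [2_{a_{r-1}}] ∗ ... ∗ [2_{a_1}], where [2_m] denotes the chain of m twos and ∗ is the chain-joining operation. -/

import Mathlib

/-- The tridiagonal matrix of a linear chain: diagonal entries from the list,
entries `-1` on the first sub- and super-diagonals, `0` elsewhere. -/
def chainMatrix (l : List ℤ) : Matrix (Fin l.length) (Fin l.length) ℤ :=
  fun i j =>
    if i = j then l.get i
    else if (i : ℕ) + 1 = (j : ℕ) ∨ (j : ℕ) + 1 = (i : ℕ) then -1 else 0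

/-- The discriminant of a linear chain. -/
def disc (l : List ℤ) : ℤ := (chainMatrix l).det

/-- A linear chain is admissible if it is nonempty and all entries are ≥ 2. -/
def Admissible (l : List ℤ) : Prop := l ≠ [] ∧ ∀ a ∈ l, 2 ≤ a

/-- The inductance of a chain. -/
def ind (l : List ℤ) : ℚ := (disc l.tail : ℚ) / (disc l : ℚ)

/-- The joining operation on nonempty linear chains. -/
def join (A B : List ℤ) : List ℤ := A.dropLast ++ [A.getLast! + B.head! - 1] ++ B.tail

/-- Join a list of chains together. -/
def joinAll : List (List ℤ) → List ℤ
  | [] => []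
  | [x] => x
  | x :: xs => join x (joinAll xs)

/-- `B` is the adjoint of `A`. -/
def IsAdjoint (A B : List ℤ) : Prop := Admissible B ∧ ind B = 1 - ind A.reverse

/-!
Write `Δ L = d L - d L.tail`. Since `d (2 :: L) = 2 d L - d L.tail`, prepending a `2` keeps `Δ`
and adds `Δ L` to `d`; raising the head of `L` by one adds `d L.tail` to `d L`. Peeling off the
first block of twos, induction on the number of blocks shows that the joined chain `C` of
`[2_{b₁}], …, [2_{bₛ}]` satisfies `d C = d A` and `Δ C = d A.tail` for `A = [b₁+1, …, bₛ+1]`, so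
`e C = d C.tail / d C = 1 - e A`. Taking `b` to be the reversal of `a` gives the formula.
-/

theorem Matrix.det_succ_succ_of_tridiagonal_head {R : Type*} [CommRing R] {n : ℕ}
    (M : Matrix (Fin (n + 2)) (Fin (n + 2)) R) (hrow : ∀ j : Fin n, M 0 j.succ.succ = 0)
    (hcol : ∀ i : Fin n, M i.succ.succ 0 = 0) :
    M.det = M 0 0 * (M.submatrix Fin.succ Fin.succ).det -
      M 0 1 * M 1 0 * (M.submatrix (Fin.succ ∘ Fin.succ) (Fin.succ ∘ Fin.succ)).det := by
  have hsucc : Fin.succAbove (1 : Fin (n + 2)) ∘ Fin.succ = Fin.succ ∘ Fin.succ := by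
    funext j
    exact Fin.succ_succAbove_succ 0 j
  have hminor : (M.submatrix Fin.succ (Fin.succAbove 1)).det =
      M 1 0 * (M.submatrix (Fin.succ ∘ Fin.succ) (Fin.succ ∘ Fin.succ)).det := by
    rw [Matrix.det_succ_column_zero, Fin.sum_univ_succ]
    simp [hcol, Matrix.submatrix_submatrix, hsucc]
  rw [Matrix.det_succ_row_zero, Fin.sum_univ_succ, Fin.sum_univ_succ]
  simp [hrow, hminor]
  ring

theorem chainMatrix_cons_submatrix_succ (x : ℤ) (l : List ℤ) :
    (chainMatrix (x :: l)).submatrix Fin.succ Fin.succ = chainMatrix l := by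
  ext i j
  simp [chainMatrix, Fin.succ_inj]

theorem disc_nil : disc [] = 1 :=
  Matrix.det_fin_zero

theorem disc_singleton (a : ℤ) : disc [a] = a :=
  (Matrix.det_fin_one _).trans (by simp [chainMatrix])

theorem disc_cons_cons (a b : ℤ) (l : List ℤ) :
    disc (a :: b :: l) = a * disc (b :: l) - disc l := by
  let M : Matrix (Fin (l.length + 2)) (Fin (l.length + 2)) ℤ := chainMatrix (a :: b :: l)
  have h₁ : (M.submatrix Fin.succ Fin.succ).det = disc (b :: l) :=
    congrArg Matrix.det (chainMatrix_cons_submatrix_succ a (b :: l))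
  have h₂ : (M.submatrix (Fin.succ ∘ Fin.succ) (Fin.succ ∘ Fin.succ)).det = disc l := by
    rw [← Matrix.submatrix_submatrix]
    have h := congrArg (Matrix.submatrix · Fin.succ Fin.succ)
      (chainMatrix_cons_submatrix_succ a (b :: l))
    exact congrArg Matrix.det (h.trans (chainMatrix_cons_submatrix_succ b l))
  rw [disc, Matrix.det_succ_succ_of_tridiagonal_head M (fun j => ?_) (fun i => ?_), h₁, h₂]
  all_goals simp [M, chainMatrix, Fin.ext_iff]

theorem disc_cons (x : ℤ) {l : List ℤ} (hl : l ≠ []) :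
    disc (x :: l) = x * disc l - disc l.tail := by
  obtain ⟨b, l, rfl⟩ := List.exists_cons_of_ne_nil hl
  exact disc_cons_cons x b l

theorem disc_succ_cons (x : ℤ) (l : List ℤ) :
    disc ((x + 1) :: l) = disc (x :: l) + disc l := by
  cases l with
  | nil => simp [disc_singleton, disc_nil]
  | cons b l => rw [disc_cons_cons, disc_cons_cons]; ring

theorem disc_pos_and_tail_le {l : List ℤ} (hl : ∀ x ∈ l, 2 ≤ x) :
    0 < disc l ∧ disc l.tail ≤ disc l := by
  induction l with
  | nil => simp [disc_nil]
  | cons x l ih =>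
    obtain ⟨hpos, hle⟩ := ih fun y hy => hl y (List.mem_cons_of_mem x hy)
    have hx := hl x List.mem_cons_self
    rcases eq_or_ne l [] with rfl | hne
    · simp [disc_singleton, disc_nil]
      omega
    · rw [List.tail_cons, disc_cons x hne]
      constructor <;> nlinarith

theorem disc_pos {l : List ℤ} (hl : ∀ x ∈ l, 2 ≤ x) : 0 < disc l :=
  (disc_pos_and_tail_le hl).1

theorem disc_sub_disc_tail_replicate_two_append (k : ℕ) {l : List ℤ} (hl : l ≠ []) :
    disc (List.replicate k 2 ++ l) - disc (List.replicate k 2 ++ l).tail =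
      disc l - disc l.tail := by
  induction k with
  | zero => simp
  | succ k ih =>
    rw [List.replicate_succ, List.cons_append, List.tail_cons, disc_cons 2 (by simp [hl]), ← ih]
    ring

theorem disc_replicate_two_append (k : ℕ) {l : List ℤ} (hl : l ≠ []) :
    disc (List.replicate k 2 ++ l) = disc l + k * (disc l - disc l.tail) := by
  induction k with
  | zero => simp
  | succ k ih =>
    have hΔ := disc_sub_disc_tail_replicate_two_append k hl
    rw [List.replicate_succ, List.cons_append, disc_cons 2 (by simp [hl])]
    push_cast
    linear_combination ih + hΔ

theorem Admissible.join {A B : List ℤ} (hA : Admissible A) (hB : Admissible B) :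
    Admissible (join A B) := by
  have hlast : A.getLast! ∈ A := by
    rw [List.getLast!_of_getLast? (List.getLast?_eq_some_getLast hA.1)]
    exact List.getLast_mem hA.1
  refine ⟨by simp [_root_.join], fun x hx => ?_⟩
  simp only [_root_.join, List.mem_append, List.mem_singleton] at hx
  rcases hx with (hx | rfl) | hx
  · exact hA.2 x (List.mem_of_mem_dropLast hx)
  · linarith [hA.2 _ hlast, hB.2 _ (List.head!_mem_self hB.1)]
  · exact hB.2 x (List.mem_of_mem_tail hx)

theorem admissible_joinAll : ∀ {Ls : List (List ℤ)}, Ls ≠ [] → (∀ L ∈ Ls, Admissible L) →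
    Admissible (joinAll Ls)
  | [L], _, h => h L (List.mem_singleton_self _)
  | L :: L' :: Ls, _, h =>
    (h L List.mem_cons_self).join (admissible_joinAll (List.cons_ne_nil L' Ls) fun M hM =>
      h M (List.mem_cons_of_mem L hM))

theorem admissible_replicate_two {k : ℕ} (hk : k ≠ 0) : Admissible (List.replicate k 2) :=
  ⟨by simpa using hk, fun x hx => (List.eq_of_mem_replicate hx).ge⟩

theorem admissible_joinAll_replicate_two {bs : List ℕ} (hbs : bs ≠ []) (hpos : ∀ a ∈ bs, 0 < a) :
    Admissible (joinAll (bs.map fun a => List.replicate a (2 : ℤ))) := by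
  refine admissible_joinAll (by simpa using hbs) fun L hL => ?_
  obtain ⟨a, ha, rfl⟩ := List.mem_map.1 hL
  exact admissible_replicate_two (hpos a ha).ne'

theorem join_replicate_two_cons (k : ℕ) (x : ℤ) (l : List ℤ) :
    join (List.replicate (k + 1) 2) (x :: l) = List.replicate k 2 ++ (x + 1) :: l := by
  simp [join, List.replicate_succ']
  ring

theorem disc_joinAll_replicate_two : ∀ {bs : List ℕ}, bs ≠ [] → (∀ a ∈ bs, 0 < a) →
    disc (joinAll (bs.map fun a => List.replicate a (2 : ℤ))) =
        disc (bs.map fun a : ℕ => (a : ℤ) + 1) ∧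
    disc (joinAll (bs.map fun a => List.replicate a (2 : ℤ))) -
        disc (joinAll (bs.map fun a => List.replicate a (2 : ℤ))).tail =
      disc (bs.map fun a : ℕ => (a : ℤ) + 1).tail
  | [a], _, hpos => by
    obtain ⟨k, rfl⟩ := Nat.exists_eq_add_one_of_ne_zero (hpos a (List.mem_singleton_self _)).ne'
    have hd := disc_replicate_two_append k (List.cons_ne_nil (2 : ℤ) [])
    have hΔ := disc_sub_disc_tail_replicate_two_append k (List.cons_ne_nil (2 : ℤ) [])
    simp only [disc_singleton, disc_nil, List.tail_cons] at hd hΔ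
    simp only [List.map_cons, List.map_nil, joinAll, List.replicate_succ', disc_singleton,
      List.tail_cons, disc_nil]
    push_cast
    constructor <;> linarith
  | a :: b :: bs, _, hpos => by
    have hpos' : ∀ c ∈ b :: bs, 0 < c := fun c hc => hpos c (List.mem_cons_of_mem a hc)
    obtain ⟨ih₁, ih₂⟩ := disc_joinAll_replicate_two (List.cons_ne_nil b bs) hpos'
    obtain ⟨k, rfl⟩ := Nat.exists_eq_add_one_of_ne_zero (hpos a List.mem_cons_self).ne'
    obtain ⟨x, l, hxl⟩ :=
      List.exists_cons_of_ne_nil (admissible_joinAll_replicate_two (List.cons_ne_nil b bs) hpos').1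
    have hjoin : joinAll (((k + 1) :: b :: bs).map fun a => List.replicate a (2 : ℤ)) =
        List.replicate k 2 ++ (x + 1) :: l := by
      rw [← join_replicate_two_cons, ← hxl]
      rfl
    have hd := disc_replicate_two_append k (List.cons_ne_nil (x + 1) l)
    have hΔ := disc_sub_disc_tail_replicate_two_append k (List.cons_ne_nil (x + 1) l)
    rw [hxl] at ih₁ ih₂
    simp only [List.tail_cons, disc_succ_cons] at hd hΔ ih₂
    rw [hjoin, List.map_cons, disc_cons _ (by simp), List.tail_cons]
    push_cast
    constructor
    · linear_combination hd + (k + 2) * ih₁ - ih₂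
    · linear_combination hΔ + ih₁

theorem ind_eq_one_sub_ind {A B : List ℤ} (hA : disc A ≠ 0) (hdisc : disc B = disc A)
    (htail : disc B - disc B.tail = disc A.tail) : ind B = 1 - ind A := by
  have hA' : (disc A : ℚ) ≠ 0 := by exact_mod_cast hA
  have htail' : disc B.tail = disc A - disc A.tail := by linarith
  rw [ind, ind, htail', hdisc]
  push_cast
  field_simp

theorem adjoint_formula (as : List ℕ) (has : as ≠ []) (hpos : ∀ a ∈ as, 0 < a) :
    IsAdjoint (as.map fun a => (a : ℤ) + 1)
      (joinAll (as.reverse.map fun a => List.replicate a (2 : ℤ))) := by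
  have hrev : as.reverse ≠ [] := by simpa using has
  have hpos' : ∀ a ∈ as.reverse, 0 < a := fun a ha => hpos a (List.mem_reverse.1 ha)
  -- `fun a => (a : ℤ) + 1` is mapped over the coerced list `↑as : List ℤ`, a monadic bind.
  have hreverse :
      (as.map fun a => (a : ℤ) + 1).reverse = as.reverse.map fun a : ℕ => (a : ℤ) + 1 := by
    simp only [bind_pure_comp, List.map_eq_map, List.map_map, List.map_reverse]
    rfl
  have hdisc_pos : 0 < disc (as.reverse.map fun a : ℕ => (a : ℤ) + 1) :=
    disc_pos fun x hx => by
      obtain ⟨a, ha, rfl⟩ := List.mem_map.1 hx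
      have := hpos' a ha
      omega
  obtain ⟨hdisc, htail⟩ := disc_joinAll_replicate_two hrev hpos'
  refine ⟨admissible_joinAll_replicate_two hrev hpos', ?_⟩
  rw [hreverse]
  exact ind_eq_one_sub_ind hdisc_pos.ne' hdisc htail
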